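/- Let F be a field, G a finite group, and V a G-module. Then topdeg F[V]_G ≤ (dim_F V) · topdeg F[V_reg]_G, where V_reg = FG is the regular representation of G. -/

import Mathlib

open MvPolynomial

variable {F G ι : Type*} [Field F] [Group G] [Fintype ι] [DecidableEq ι]

/-- The (left) action of a group element `σ` on the polynomial algebra
`F[V] = S(V^*)` presented as `MvPolynomial ι F`, for a matrix representation
`ρ : G →* GL(ι, F)` of `G` on `V = (ι → F)`.  It is given by `σ • f = f ∘ σ⁻¹`,
i.e. by linear substitution of the variables using the matrix of `ρ σ⁻¹`. -/
noncomputable def polyAct (ρ : G →* (Matrix ι ι F)ˣ) (σ : G)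
    (f : MvPolynomial ι F) : MvPolynomial ι F :=
  MvPolynomial.aeval
    (fun i => ∑ j, ((ρ σ⁻¹ : Matrix ι ι F) i j) • (MvPolynomial.X j : MvPolynomial ι F)) f

/-- A polynomial is invariant if it is fixed by the action of every group element. -/
def IsInv (ρ : G →* (Matrix ι ι F)ˣ) (f : MvPolynomial ι F) : Prop :=
  ∀ σ : G, polyAct ρ σ f = f

/-- The Hilbert ideal: the ideal of `F[V]` generated by the homogeneous invariants
of positive degree. -/
noncomputable def hilbertIdeal (ρ : G →* (Matrix ι ι F)ˣ) : Ideal (MvPolynomial ι F) :=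
  Ideal.span {f : MvPolynomial ι F | (∃ d, 0 < d ∧ f.IsHomogeneous d) ∧ IsInv ρ f}

/-- The top degree of the coinvariant algebra `F[V]_G = F[V]/(Hilbert ideal)`:
the largest degree `d` such that the degree-`d` homogeneous component of `F[V]_G`
is nonzero; since the Hilbert ideal is homogeneous this is the largest `d` for
which some homogeneous polynomial of degree `d` is not in the Hilbert ideal. -/
noncomputable def topDeg (ρ : G →* (Matrix ι ι F)ˣ) : ℕ :=
  sSup {d : ℕ | ∃ f : MvPolynomial ι F, f.IsHomogeneous d ∧ f ∉ hilbertIdeal ρ}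

/-- The dimension of the coinvariant algebra `F[V]_G` as an `F`-vector space. -/
noncomputable def coinvDim (ρ : G →* (Matrix ι ι F)ˣ) : ℕ :=
  Module.finrank F (MvPolynomial ι F ⧸ hilbertIdeal ρ)

/-- The permutation-matrix representation of the symmetric group on `ι`,
acting on `V = (ι → F)` by permuting coordinates: `(σ • v) i = v (σ⁻¹ i)`. -/
noncomputable def permGL (F : Type*) [Field F] {ι : Type*} [Fintype ι] [DecidableEq ι] :
    Equiv.Perm ι →* (Matrix ι ι F)ˣ where
  toFun e :=
    { val := (e⁻¹.toPEquiv.toMatrix : Matrix ι ι F)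
      inv := (e.toPEquiv.toMatrix : Matrix ι ι F)
      val_inv := by
        rw [← PEquiv.toMatrix_trans, ← Equiv.toPEquiv_trans]
        simp [Equiv.Perm.one_def, Equiv.toPEquiv_refl, Equiv.Perm.inv_def]
      inv_val := by
        rw [← PEquiv.toMatrix_trans, ← Equiv.toPEquiv_trans]
        simp [Equiv.Perm.one_def, Equiv.toPEquiv_refl, Equiv.Perm.inv_def] }
  map_one' := by
    ext i j
    simp [Equiv.Perm.one_def, Equiv.toPEquiv_refl, Matrix.one_apply]
  map_mul' := by
    intro e f
    apply Units.ext
    show ((e * f)⁻¹).toPEquiv.toMatrix = _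
    simp only [Units.val_mul]
    rw [← PEquiv.toMatrix_trans, ← Equiv.toPEquiv_trans]
    congr 1

/-- The (left) regular representation of a finite group `G`, as permutation
matrices indexed by `G`. -/
noncomputable def regRep (F : Type*) (G : Type*) [Field F] [Group G] [Fintype G]
    [DecidableEq G] : G →* (Matrix G G F)ˣ :=
  (permGL F).comp (MulAction.toPermHom G G)

/-!
The top degree of `F[V_reg]_G` is finite: substituting `T = -X g` in
`∏ h, (T + X h) = ∑ k, esymm k * T ^ (|G| - k)` writes `X g ^ |G|` as a combination of the
invariant elementary symmetric polynomials. Hence `X 1 ^ k` lies in the Hilbert ideal of `V_reg`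
once `k > topdeg F[V_reg]_G`. For each coordinate `x i` of `V`, the equivariant linear map
`V → V_reg`, `v ↦ ∑ g, (ρ g⁻¹ v) i • g`, pulls `X 1` back to `x i` and carries the Hilbert ideal
of `V_reg` into that of `V`, so `x i ^ k` lies in the Hilbert ideal of `V`. Finally, a monomial
of degree larger than `dim V * topdeg F[V_reg]_G` is divisible by such a power of some `x i`.
-/

theorem Finsupp.exists_lt_apply_of_card_mul_lt_degree {σ : Type*} [Fintype σ] (μ : σ →₀ ℕ) {t : ℕ}
    (h : Fintype.card σ * t < μ.degree) : ∃ i, t < μ i := by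
  rw [Finsupp.degree_eq_sum, ← smul_eq_mul, ← Finset.card_univ, ← Finset.sum_const] at h
  simpa using Finset.exists_lt_of_sum_lt h

namespace MvPolynomial

variable {σ R : Type*}

theorem isHomogeneous_esymm [CommSemiring R] [Fintype σ] (n : ℕ) :
    (esymm σ R n).IsHomogeneous n := by
  rw [esymm_eq_sum_monomial]
  refine IsHomogeneous.sum _ _ _ fun t ht => isHomogeneous_monomial _ ?_
  rw [map_sum]
  simpa [Finsupp.degree_single] using (Finset.mem_powersetCard.mp ht).2

theorem X_pow_card_mem_span_esymm [CommRing R] [Fintype σ] (i : σ) :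
    X i ^ Fintype.card σ ∈ Ideal.span (Set.range fun k => esymm σ R (k + 1)) := by
  set I := Ideal.span (Set.range fun k => esymm σ R (k + 1))
  have hvieta := congrArg (Polynomial.eval (-X i)) (prod_C_add_X_eq_sum_esymm R σ)
  simp only [Polynomial.eval_prod, Polynomial.eval_add, Polynomial.eval_X, Polynomial.eval_C,
    Polynomial.eval_finsetSum, Polynomial.eval_mul, Polynomial.eval_pow] at hvieta
  rw [Finset.prod_eq_zero (Finset.mem_univ i) (neg_add_cancel _), Finset.sum_range_succ',
    esymm_zero, one_mul, Nat.sub_zero, eq_comm, add_eq_zero_iff_eq_neg'] at hvieta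
  have hneg : (-X i) ^ Fintype.card σ ∈ I := by
    rw [hvieta]
    exact neg_mem (Ideal.sum_mem _ fun k _ =>
      Ideal.mul_mem_right _ _ (Ideal.subset_span ⟨k, rfl⟩))
  simpa [← mul_pow] using I.mul_mem_left ((-1) ^ Fintype.card σ) hneg

theorem IsHomogeneous.mem_of_X_pow_mem [CommSemiring R] [Fintype σ]
    {I : Ideal (MvPolynomial σ R)} {t : ℕ} (hX : ∀ i, X i ^ (t + 1) ∈ I)
    {f : MvPolynomial σ R} {d : ℕ} (hf : f.IsHomogeneous d) (hd : Fintype.card σ * t < d) :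
    f ∈ I := by
  rw [f.as_sum]
  refine I.sum_mem fun μ hμ => ?_
  have hdeg : μ.degree = d := by
    rw [Finsupp.degree_eq_weight_one]; exact hf (mem_support_iff.mp hμ)
  obtain ⟨i, hi⟩ := Finsupp.exists_lt_apply_of_card_mul_lt_degree μ (hdeg ▸ hd)
  have hle : Finsupp.single i (t + 1) ≤ μ := Finsupp.single_le_iff.mpr hi
  have hsplit : monomial μ (coeff μ f) = monomial (μ - Finsupp.single i (t + 1)) (coeff μ f) *
      X i ^ (t + 1) := by
    rw [X_pow_eq_monomial, monomial_mul, mul_one, tsub_add_cancel_of_le hle]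
  exact hsplit ▸ I.mul_mem_left _ (hX i)

end MvPolynomial

section Invariants

variable {F G ι : Type*} [Field F] [Group G] [Fintype ι] [DecidableEq ι]

theorem polyAct_X (ρ : G →* (Matrix ι ι F)ˣ) (σ : G) (i : ι) :
    polyAct ρ σ (X i) = ∑ j, (ρ σ⁻¹ : Matrix ι ι F) i j • X j :=
  aeval_X _ i

theorem isHomogeneous_polyAct_X (ρ : G →* (Matrix ι ι F)ˣ) (σ : G) (i : ι) :
    (polyAct ρ σ (X i)).IsHomogeneous 1 := by
  simp_rw [polyAct_X, smul_eq_C_mul]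
  exact IsHomogeneous.sum _ _ _ fun j _ => isHomogeneous_C_mul_X _ j

theorem polyAct_one (ρ : G →* (Matrix ι ι F)ˣ) (f : MvPolynomial ι F) :
    polyAct ρ 1 f = f := by
  conv_rhs => rw [← aeval_X_left_apply f]
  refine congrArg (aeval · f) (funext fun i => ?_)
  rw [inv_one, map_one, Units.val_one]
  simp [Matrix.one_apply]

theorem polyAct_mul (ρ : G →* (Matrix ι ι F)ˣ) (σ τ : G) (f : MvPolynomial ι F) :
    polyAct ρ (σ * τ) f = polyAct ρ σ (polyAct ρ τ f) := by
  unfold polyAct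
  rw [← AlgHom.comp_apply, comp_aeval]
  refine congrArg (aeval · f) (funext fun i => ?_)
  simp only [map_sum, map_smul, aeval_X, Finset.smul_sum, smul_smul]
  rw [Finset.sum_comm]
  refine Finset.sum_congr rfl fun k _ => ?_
  rw [← Finset.sum_smul, mul_inv_rev, map_mul, Units.val_mul, Matrix.mul_apply]

theorem map_hilbertIdeal_le {κ : Type*} [Fintype κ] [DecidableEq κ]
    (ρ' : G →* (Matrix κ κ F)ˣ) (ρ : G →* (Matrix ι ι F)ˣ)
    (T : MvPolynomial κ F →ₐ[F] MvPolynomial ι F) (hT : ∀ k, (T (X k)).IsHomogeneous 1)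
    (hequiv : ∀ σ f, T (polyAct ρ' σ f) = polyAct ρ σ (T f)) :
    (hilbertIdeal ρ').map T ≤ hilbertIdeal ρ := by
  rw [hilbertIdeal, Ideal.map_span]
  refine Ideal.span_mono ?_
  rintro _ ⟨f, ⟨⟨d, hd, hf⟩, hinv⟩, rfl⟩
  refine ⟨⟨d, hd, ?_⟩, fun σ => ?_⟩
  · rw [DFunLike.congr_fun (aeval_unique T) f]
    simpa using hf.aeval (T ∘ X) hT
  · rw [← hequiv, hinv σ]

theorem topDeg_le_of_X_pow_mem (ρ : G →* (Matrix ι ι F)ˣ) {t : ℕ}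
    (hX : ∀ i, X i ^ (t + 1) ∈ hilbertIdeal ρ) : topDeg ρ ≤ Fintype.card ι * t :=
  csSup_le' fun _ ⟨_, hf, hnotMem⟩ =>
    not_lt.mp fun hd => hnotMem (hf.mem_of_X_pow_mem hX hd)

theorem mem_hilbertIdeal_of_topDeg_lt (ρ : G →* (Matrix ι ι F)ˣ) {t : ℕ}
    (hX : ∀ i, X i ^ (t + 1) ∈ hilbertIdeal ρ) {f : MvPolynomial ι F} {d : ℕ}
    (hf : f.IsHomogeneous d) (hd : topDeg ρ < d) : f ∈ hilbertIdeal ρ := by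
  by_contra hnotMem
  have hbdd : BddAbove {d | ∃ f : MvPolynomial ι F, f.IsHomogeneous d ∧ f ∉ hilbertIdeal ρ} :=
    ⟨_, fun _ ⟨_, hg, hgnotMem⟩ =>
      not_lt.mp fun he => hgnotMem (hg.mem_of_X_pow_mem hX he)⟩
  exact (le_csSup hbdd ⟨f, hf, hnotMem⟩).not_gt hd

end Invariants

section RegularRepresentation

variable {F G : Type*} [Field F] [Group G] [Fintype G] [DecidableEq G]

theorem polyAct_regRep (σ : G) (f : MvPolynomial G F) :
    polyAct (regRep F G) σ f = rename (σ * ·) f := by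
  rw [polyAct, DFunLike.congr_fun (aeval_unique (rename (σ * ·))) f]
  refine congrArg (fun x : G → MvPolynomial G F => aeval x f) (funext fun g => ?_)
  have hmat : ((regRep F G σ⁻¹ : (Matrix G G F)ˣ) : Matrix G G F) =
      (MulAction.toPermHom G G σ).toPEquiv.toMatrix := by
    show ((MulAction.toPermHom G G σ⁻¹)⁻¹).toPEquiv.toMatrix = _
    rw [← map_inv, inv_inv]
  rw [Function.comp_apply, rename_X, hmat]
  simp [PEquiv.toMatrix_apply, ite_smul, eq_comm]

theorem esymm_mem_hilbertIdeal_regRep (k : ℕ) :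
    esymm G F (k + 1) ∈ hilbertIdeal (regRep F G) :=
  Ideal.subset_span ⟨⟨k + 1, k.succ_pos, isHomogeneous_esymm _⟩,
    fun σ => (polyAct_regRep σ _).trans (esymm_isSymmetric G F _ (Equiv.mulLeft σ))⟩

theorem X_pow_card_mem_hilbertIdeal_regRep (g : G) :
    X g ^ Fintype.card G ∈ hilbertIdeal (regRep F G) :=
  Ideal.span_le.mpr (Set.range_subset_iff.mpr esymm_mem_hilbertIdeal_regRep)
    (X_pow_card_mem_span_esymm g)

theorem X_pow_mem_hilbertIdeal_regRep_of_topDeg_lt (g : G) {k : ℕ}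
    (hk : topDeg (regRep F G) < k) : X g ^ k ∈ hilbertIdeal (regRep F G) :=
  mem_hilbertIdeal_of_topDeg_lt _ (t := Fintype.card G - 1)
    (fun h => by
      simpa [Nat.sub_add_cancel Fintype.card_pos] using
        X_pow_card_mem_hilbertIdeal_regRep (F := F) h)
    (isHomogeneous_X_pow g k) hk

end RegularRepresentation

section Transfer

variable {F G ι : Type*} [Field F] [Group G] [Fintype G] [DecidableEq G]
  [Fintype ι] [DecidableEq ι]

noncomputable def regCoordHom (ρ : G →* (Matrix ι ι F)ˣ) (i : ι) :
    MvPolynomial G F →ₐ[F] MvPolynomial ι F :=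
  aeval fun g => polyAct ρ g (X i)

theorem regCoordHom_polyAct (ρ : G →* (Matrix ι ι F)ˣ) (i : ι) (σ : G) (f : MvPolynomial G F) :
    regCoordHom ρ i (polyAct (regRep F G) σ f) = polyAct ρ σ (regCoordHom ρ i f) := by
  rw [polyAct_regRep, regCoordHom, aeval_rename, polyAct, ← AlgHom.comp_apply, comp_aeval]
  refine congrArg (fun x : G → MvPolynomial ι F => aeval x f) (funext fun g => ?_)
  rw [Function.comp_apply, polyAct_mul]
  rfl

theorem X_pow_mem_hilbertIdeal_of_regRep (ρ : G →* (Matrix ι ι F)ˣ) (i : ι) {k : ℕ}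
    (hk : X 1 ^ k ∈ hilbertIdeal (regRep F G)) : X i ^ k ∈ hilbertIdeal ρ := by
  have hmap := map_hilbertIdeal_le (regRep F G) ρ (regCoordHom ρ i)
    (fun g => by rw [regCoordHom, aeval_X]; exact isHomogeneous_polyAct_X ρ g i)
    (regCoordHom_polyAct ρ i) (Ideal.mem_map_of_mem _ hk)
  rwa [map_pow, regCoordHom, aeval_X, polyAct_one] at hmap

end Transfer

/-- For any `G`-module `V`,
`topdeg F[V]_G ≤ (dim_F V) · topdeg F[V_reg]_G` where `V_reg = FG` is the
regular representation. -/
theorem topDeg_le_dim_mul_topDeg_reg [Fintype G] [DecidableEq G]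
    (ρ : G →* (Matrix ι ι F)ˣ) :
    topDeg ρ ≤ Fintype.card ι * topDeg (regRep F G) :=
  topDeg_le_of_X_pow_mem ρ fun i => X_pow_mem_hilbertIdeal_of_regRep ρ i
    (X_pow_mem_hilbertIdeal_regRep_of_topDeg_lt 1 (Nat.lt_succ_self _))
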